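/- arXiv:1907.05679 — 2 statements merged into one kernel-verified Lean document; each statement's English description precedes it below -/
import Mathlib

section
/- Let λ₀ ≥ 0, let L ∈ ℝ, and let V, f₁, f₂ : ℝ → M_n(ℂ) be continuous, bounded, Hermitian-matrix-valued with f₁(x) positive definite and f₂(x) positive semidefinite for all x. Suppose y₀ is a nonzero H²-solution on (-∞, L] of y₀″ + V y₀ = λ₀ f₁ y₀ + λ₀² f₂ y₀ with y₀(L) = 0. Then there exists no H²-solution y₁ on (-∞, L] satisfying y₁(L) = 0 and y₁″ + V y₁ − λ₀ f₁ y₁ − λ₀² f₂ y₁ = (f₁ + 2λ₀ f₂) y₀; that is, every nonnegative eigenvalue of the truncated Dirichlet problem is semisimple. -/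
/-!
By Lagrange's identity for the symmetric operator `λ₀ f₁ + λ₀² f₂ - V`, the Wronskian
`W = ⟪y₀, y₁'⟫ - ⟪y₀', y₁⟫` has derivative `⟪y₀, (f₁ + 2 λ₀ f₂) y₀⟫`, whose real part is
nonnegative (as `λ₀ ≥ 0`) and positive wherever `y₀ ≠ 0`. Hence `Re W` is monotone on
`(-∞, L]`; it vanishes at `L` by the Dirichlet conditions and is integrable because `y₀, y₁` are
`H¹`. A monotone integrable function on `(-∞, L]` vanishing at `L` is identically zero, so its
derivative vanishes too, contradicting positivity at a point where `y₀ ≠ 0`.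
-/

open MeasureTheory Matrix Set
open scoped ComplexOrder

noncomputable section

def mact {n : ℕ} (M : Matrix (Fin n) (Fin n) ℂ) (v : EuclideanSpace ℂ (Fin n)) :
    EuclideanSpace ℂ (Fin n) :=
  Matrix.toEuclideanCLM (𝕜 := ℂ) M v

section Wronskian

variable (𝕜 : Type*) {E : Type*} [RCLike 𝕜] [NormedAddCommGroup E] [InnerProductSpace 𝕜 E]

local notation "⟪" x ", " y "⟫" => inner 𝕜 x y

def wronskian (u u' v v' : ℝ → E) (t : ℝ) : 𝕜 := ⟪u t, v' t⟫ - ⟪u' t, v t⟫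

variable {𝕜}

theorem integrable_inner_of_integrable_norm_sq {α : Type*} [MeasurableSpace α] {μ : Measure α}
    {u v : α → E} (hu : AEStronglyMeasurable u μ) (hv : AEStronglyMeasurable v μ)
    (hu2 : Integrable (fun x => ‖u x‖ ^ 2) μ) (hv2 : Integrable (fun x => ‖v x‖ ^ 2) μ) :
    Integrable (fun x => ⟪u x, v x⟫) μ := by
  refine (hu2.add hv2).mono' (hu.inner hv) (.of_forall fun x => ?_)
  calc ‖⟪u x, v x⟫‖ ≤ ‖u x‖ * ‖v x‖ := norm_inner_le_norm _ _
    _ ≤ ‖u x‖ ^ 2 + ‖v x‖ ^ 2 := by nlinarith [sq_nonneg (‖u x‖ - ‖v x‖)]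

theorem integrable_wronskian {u u' v v' : ℝ → E} {μ : Measure ℝ}
    (hu : AEStronglyMeasurable u μ) (hu' : AEStronglyMeasurable u' μ)
    (hv : AEStronglyMeasurable v μ) (hv' : AEStronglyMeasurable v' μ)
    (hu2 : Integrable (fun x => ‖u x‖ ^ 2) μ) (hu'2 : Integrable (fun x => ‖u' x‖ ^ 2) μ)
    (hv2 : Integrable (fun x => ‖v x‖ ^ 2) μ) (hv'2 : Integrable (fun x => ‖v' x‖ ^ 2) μ) :
    Integrable (wronskian 𝕜 u u' v v') μ :=
  (integrable_inner_of_integrable_norm_sq hu hv' hu2 hv'2).sub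
    (integrable_inner_of_integrable_norm_sq hu' hv hu'2 hv2)

variable [NormedSpace ℝ E]

theorem hasDerivWithinAt_wronskian_of_isSymmetric {T : E →ₗ[𝕜] E} (hT : T.IsSymmetric)
    {u u' u'' v v' v'' : ℝ → E} {w : E} {s : Set ℝ} {x : ℝ}
    (hu : HasDerivWithinAt u (u' x) s x) (hu' : HasDerivWithinAt u' (u'' x) s x)
    (hv : HasDerivWithinAt v (v' x) s x) (hv' : HasDerivWithinAt v' (v'' x) s x)
    (hu'' : u'' x = T (u x)) (hv'' : v'' x = T (v x) + w) :
    HasDerivWithinAt (wronskian 𝕜 u u' v v') ⟪u x, w⟫ s x := by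
  refine ((hu.inner 𝕜 hv').sub (hu'.inner 𝕜 hv)).congr_deriv ?_
  rw [hu'', hv'', inner_add_right, hT]
  ring

end Wronskian

theorem HasDerivWithinAt.rclike_re {𝕜 : Type*} [RCLike 𝕜] {f : ℝ → 𝕜} {f' : 𝕜} {s : Set ℝ}
    {x : ℝ} (h : HasDerivWithinAt f f' s x) :
    HasDerivWithinAt (fun t => RCLike.re (f t)) (RCLike.re f') s x :=
  RCLike.reCLM.hasFDerivAt.comp_hasDerivWithinAt (f := f) x h

section HalfLine

variable {u u' : ℝ → ℝ} {L : ℝ}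

theorem MonotoneOn.nonneg_of_integrableOn_Iic (hu : MonotoneOn u (Iic L))
    (hint : IntegrableOn u (Iic L)) {x : ℝ} (hx : x ≤ L) : 0 ≤ u x := by
  by_contra! hneg
  have hconst : IntegrableOn (fun _ => u x) (Iic x) := by
    refine Integrable.mono (hint.mono_set (Iic_subset_Iic.mpr hx)) aestronglyMeasurable_const ?_
    refine (ae_restrict_iff' measurableSet_Iic).mpr (.of_forall fun t ht => ?_)
    have := hu (le_trans ht hx) hx ht
    rw [Real.norm_of_nonpos hneg.le, Real.norm_of_nonpos (by linarith)]
    linarith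
  rw [integrableOn_const_iff] at hconst
  simp [hneg.ne] at hconst

theorem MonotoneOn.eqOn_zero_of_integrableOn_Iic (hu : MonotoneOn u (Iic L))
    (hint : IntegrableOn u (Iic L)) (hL : u L = 0) : EqOn u 0 (Iic L) := fun x hx =>
  le_antisymm (hL ▸ hu hx self_mem_Iic hx : u x ≤ 0) (hu.nonneg_of_integrableOn_Iic hint hx)

theorem eq_zero_of_hasDerivWithinAt_nonneg_of_integrableOn_Iic
    (hu : ∀ x ∈ Iic L, HasDerivWithinAt u (u' x) (Iic L) x) (hu' : ∀ x ∈ Iic L, 0 ≤ u' x)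
    (hint : IntegrableOn u (Iic L)) (hL : u L = 0) {x : ℝ} (hx : x ∈ Iic L) : u' x = 0 := by
  have hmono : MonotoneOn u (Iic L) := by
    refine monotoneOn_of_hasDerivWithinAt_nonneg (convex_Iic L)
      (fun t ht => (hu t ht).continuousWithinAt) (fun t ht => ?_) (fun t ht => hu' t ?_)
    all_goals rw [interior_Iic, mem_Iio] at ht
    · exact ((hu t ht.le).hasDerivAt (Iic_mem_nhds ht)).hasDerivWithinAt
    · exact ht.le
  have hzero := hmono.eqOn_zero_of_integrableOn_Iic hint hL
  exact (uniqueDiffOn_Iic L x hx).eq_deriv _ ((hu x hx).congr hzero.symm (hzero hx).symm)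
    (hasDerivWithinAt_const x _ 0)

end HalfLine

section MatrixAction

variable {n : ℕ} {M : Matrix (Fin n) (Fin n) ℂ}

local notation "⟪" x ", " y "⟫" => inner ℂ x y

theorem mact_eq_toEuclideanLin (M : Matrix (Fin n) (Fin n) ℂ) (v : EuclideanSpace ℂ (Fin n)) :
    mact M v = M.toEuclideanLin v := rfl

theorem Matrix.PosSemidef.re_inner_mact_nonneg (hM : M.PosSemidef)
    (v : EuclideanSpace ℂ (Fin n)) : 0 ≤ (⟪v, mact M v⟫).re := by
  convert hM.re_dotProduct_nonneg ((WithLp.equiv 2 _) v) using 2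
  simp [mact, EuclideanSpace.inner_eq_star_dotProduct, dotProduct_comm]

theorem Matrix.PosDef.re_inner_mact_pos (hM : M.PosDef)
    {v : EuclideanSpace ℂ (Fin n)} (hv : v ≠ 0) : 0 < (⟪v, mact M v⟫).re := by
  convert hM.re_dotProduct_pos (fun h => hv ((WithLp.equiv 2 _).injective h)) using 2
  simp [mact, EuclideanSpace.inner_eq_star_dotProduct, dotProduct_comm]

theorem mact_smul_add_smul_sub (a b : ℂ) (M N P : Matrix (Fin n) (Fin n) ℂ)
    (v : EuclideanSpace ℂ (Fin n)) :
    mact (a • M + b • N - P) v = a • mact M v + b • mact N v - mact P v := by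
  simp [mact]

end MatrixAction

theorem truncated_dirichlet_nonneg_eigenvalue_semisimple_general {n : ℕ}
    (lam₀ : ℝ) (hlam₀ : 0 ≤ lam₀) (L : ℝ)
    (V f₁ f₂ : ℝ → Matrix (Fin n) (Fin n) ℂ)
    (hVherm : ∀ x : ℝ, (V x).IsHermitian)
    (hf₁pos : ∀ x : ℝ, (f₁ x).PosDef)
    (hf₂pos : ∀ x : ℝ, (f₂ x).PosSemidef)
    (y₀ y₀' y₀'' : ℝ → EuclideanSpace ℂ (Fin n))
    (hy₀ne : ∃ x ∈ Iic L, y₀ x ≠ 0)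
    (hy₀1 : ∀ x ∈ Iic L, HasDerivWithinAt y₀ (y₀' x) (Iic L) x)
    (hy₀2 : ∀ x ∈ Iic L, HasDerivWithinAt y₀' (y₀'' x) (Iic L) x)
    (hy₀L2 : Integrable (fun x => ‖y₀ x‖ ^ 2) (volume.restrict (Iic L)))
    (hy₀'L2 : Integrable (fun x => ‖y₀' x‖ ^ 2) (volume.restrict (Iic L)))
    (hy₀eqn : ∀ x ∈ Iic L, y₀'' x + mact (V x) (y₀ x)
        = (lam₀ : ℂ) • mact (f₁ x) (y₀ x) + (lam₀ : ℂ) ^ 2 • mact (f₂ x) (y₀ x))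
    (hy₀bc : y₀ L = 0) :
    ¬ ∃ y₁ y₁' y₁'' : ℝ → EuclideanSpace ℂ (Fin n),
      (∀ x ∈ Iic L, HasDerivWithinAt y₁ (y₁' x) (Iic L) x) ∧
      (∀ x ∈ Iic L, HasDerivWithinAt y₁' (y₁'' x) (Iic L) x) ∧
      ContinuousOn y₁'' (Iic L) ∧
      Integrable (fun x => ‖y₁ x‖ ^ 2) (volume.restrict (Iic L)) ∧
      Integrable (fun x => ‖y₁' x‖ ^ 2) (volume.restrict (Iic L)) ∧
      Integrable (fun x => ‖y₁'' x‖ ^ 2) (volume.restrict (Iic L)) ∧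
      y₁ L = 0 ∧
      (∀ x ∈ Iic L,
        y₁'' x + mact (V x) (y₁ x) - (lam₀ : ℂ) • mact (f₁ x) (y₁ x)
            - (lam₀ : ℂ) ^ 2 • mact (f₂ x) (y₁ x)
          = mact (f₁ x + (2 * lam₀ : ℂ) • f₂ x) (y₀ x)) := by
  rintro ⟨y₁, y₁', y₁'', hy₁1, hy₁2, -, hy₁L2, hy₁'L2, -, hy₁bc, hy₁eqn⟩
  set A := fun x => (lam₀ : ℂ) • f₁ x + (lam₀ : ℂ) ^ 2 • f₂ x - V x
  set B := fun x => f₁ x + (2 * lam₀ : ℂ) • f₂ x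
  have hreal : IsSelfAdjoint (lam₀ : ℂ) := Complex.conj_ofReal lam₀
  have hA : ∀ x, (A x).IsHermitian := fun x =>
    (((hf₁pos x).isHermitian.smul hreal).add ((hf₂pos x).isHermitian.smul (hreal.pow 2))).sub
      (hVherm x)
  have hB : ∀ x, (B x).PosDef := fun x =>
    (hf₁pos x).add_posSemidef ((hf₂pos x).smul (by positivity))
  have hmeas : ∀ {y y' : ℝ → EuclideanSpace ℂ (Fin n)},
      (∀ x ∈ Iic L, HasDerivWithinAt y (y' x) (Iic L) x) →
      AEStronglyMeasurable y (volume.restrict (Iic L)) := fun hy =>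
    ContinuousOn.aestronglyMeasurable (fun x hx => (hy x hx).continuousWithinAt) measurableSet_Iic
  have hW : ∀ x ∈ Iic L, HasDerivWithinAt (fun t => RCLike.re (wronskian ℂ y₀ y₀' y₁ y₁' t))
      (inner ℂ (y₀ x) (mact (B x) (y₀ x))).re (Iic L) x := fun x hx =>
    (hasDerivWithinAt_wronskian_of_isSymmetric (isSymmetric_toEuclideanLin_iff.mpr (hA x))
      (hy₀1 x hx) (hy₀2 x hx) (hy₁1 x hx) (hy₁2 x hx)
      (by rw [← mact_eq_toEuclideanLin, mact_smul_add_smul_sub]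
          linear_combination (norm := module) hy₀eqn x hx)
      (by rw [← mact_eq_toEuclideanLin, mact_smul_add_smul_sub]
          linear_combination (norm := module) hy₁eqn x hx)).rclike_re
  have hWint : IntegrableOn (fun t => RCLike.re (wronskian ℂ y₀ y₀' y₁ y₁' t)) (Iic L) :=
    (integrable_wronskian (hmeas hy₀1) (hmeas hy₀2) (hmeas hy₁1) (hmeas hy₁2)
      hy₀L2 hy₀'L2 hy₁L2 hy₁'L2).re
  obtain ⟨x₀, hx₀, hy₀x₀⟩ := hy₀ne
  refine ((hB x₀).re_inner_mact_pos hy₀x₀).ne' <|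
    eq_zero_of_hasDerivWithinAt_nonneg_of_integrableOn_Iic hW
      (fun x _ => (hB x).posSemidef.re_inner_mact_nonneg _) hWint ?_ hx₀
  simp [wronskian, hy₀bc, hy₁bc]

/-- nonnegative eigenvalues of the truncated Dirichlet problem on `(-∞, L]`
are semisimple: there is no generalized eigenfunction `y₁` above an eigenfunction `y₀`. -/
theorem truncated_dirichlet_nonneg_eigenvalue_semisimple {n : ℕ} (hn : 1 ≤ n)
    (lam₀ : ℝ) (hlam₀ : 0 ≤ lam₀) (L : ℝ)
    (V f₁ f₂ : ℝ → Matrix (Fin n) (Fin n) ℂ)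
    (hVcont : Continuous V)
    (hf₁cont : Continuous f₁)
    (hf₂cont : Continuous f₂)
    (hbdd : ∃ C : ℝ, ∀ x : ℝ,
      ‖Matrix.toEuclideanCLM (𝕜 := ℂ) (V x)‖ ≤ C ∧
      ‖Matrix.toEuclideanCLM (𝕜 := ℂ) (f₁ x)‖ ≤ C ∧
      ‖Matrix.toEuclideanCLM (𝕜 := ℂ) (f₂ x)‖ ≤ C)
    (hVherm : ∀ x : ℝ, (V x).IsHermitian)
    (hf₁herm : ∀ x : ℝ, (f₁ x).IsHermitian)
    (hf₂herm : ∀ x : ℝ, (f₂ x).IsHermitian)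
    (hf₁pos : ∀ x : ℝ, (f₁ x).PosDef)
    (hf₂pos : ∀ x : ℝ, (f₂ x).PosSemidef)
    (y₀ y₀' y₀'' : ℝ → EuclideanSpace ℂ (Fin n))
    (hy₀ne : ∃ x ∈ Iic L, y₀ x ≠ 0)
    (hy₀1 : ∀ x ∈ Iic L, HasDerivWithinAt y₀ (y₀' x) (Iic L) x)
    (hy₀2 : ∀ x ∈ Iic L, HasDerivWithinAt y₀' (y₀'' x) (Iic L) x)
    (hy₀cont : ContinuousOn y₀'' (Iic L))
    (hy₀L2 : Integrable (fun x => ‖y₀ x‖ ^ 2) (volume.restrict (Iic L)))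
    (hy₀'L2 : Integrable (fun x => ‖y₀' x‖ ^ 2) (volume.restrict (Iic L)))
    (hy₀''L2 : Integrable (fun x => ‖y₀'' x‖ ^ 2) (volume.restrict (Iic L)))
    (hy₀eqn : ∀ x ∈ Iic L, y₀'' x + mact (V x) (y₀ x)
        = (lam₀ : ℂ) • mact (f₁ x) (y₀ x) + (lam₀ : ℂ) ^ 2 • mact (f₂ x) (y₀ x))
    (hy₀bc : y₀ L = 0) :
    ¬ ∃ y₁ y₁' y₁'' : ℝ → EuclideanSpace ℂ (Fin n),
      (∀ x ∈ Iic L, HasDerivWithinAt y₁ (y₁' x) (Iic L) x) ∧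
      (∀ x ∈ Iic L, HasDerivWithinAt y₁' (y₁'' x) (Iic L) x) ∧
      ContinuousOn y₁'' (Iic L) ∧
      Integrable (fun x => ‖y₁ x‖ ^ 2) (volume.restrict (Iic L)) ∧
      Integrable (fun x => ‖y₁' x‖ ^ 2) (volume.restrict (Iic L)) ∧
      Integrable (fun x => ‖y₁'' x‖ ^ 2) (volume.restrict (Iic L)) ∧
      y₁ L = 0 ∧
      (∀ x ∈ Iic L,
        y₁'' x + mact (V x) (y₁ x) - (lam₀ : ℂ) • mact (f₁ x) (y₁ x)
            - (lam₀ : ℂ) ^ 2 • mact (f₂ x) (y₁ x)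
          = mact (f₁ x + (2 * lam₀ : ℂ) • f₂ x) (y₀ x)) :=
  truncated_dirichlet_nonneg_eigenvalue_semisimple_general lam₀ hlam₀ L V f₁ f₂ hVherm hf₁pos hf₂pos
    y₀ y₀' y₀'' hy₀ne hy₀1 hy₀2 hy₀L2 hy₀'L2 hy₀eqn hy₀bc
end
end

section
/- Let V, f₁, f₂ : ℝ → M_n(ℂ) be continuous, bounded, Hermitian-matrix-valued functions with f₁(x) positive definite and f₂(x) positive semidefinite for every x ∈ ℝ. If λ ∈ ℂ with Re λ ≥ 0 is such that there exists a nonzero H²-solution y on ℝ of y″(x) + V(x)y(x) = λ f₁(x)y(x) + λ² f₂(x)y(x), then Im λ = 0; that is, every eigenvalue of the whole-line problem with nonnegative real part is real. -/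
open MeasureTheory Matrix Set
open scoped ComplexOrder

noncomputable section

/-! Put `w = Re ⟨f₁ y, y⟩ + 2 Re λ · Re ⟨f₂ y, y⟩ ≥ 0`, positive wherever `y ≠ 0`. In
`Im ⟨y'', y⟩` computed from the equation the Hermitian terms drop out, giving
`(Im ⟨y', y⟩)' = -Im λ · w`. So `v = Im λ · Im ⟨y', y⟩` has derivative `-(Im λ)² w ≤ 0`; being
antitone and integrable (as `y, y' ∈ L²`), `v` vanishes identically, and then `(Im λ)² w = 0`. -/

section QuadraticForm

variable {n : ℕ} {M : Matrix (Fin n) (Fin n) ℂ}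

lemma Matrix.IsHermitian.ofReal_re_inner_mact_self (hM : M.IsHermitian)
    (v : EuclideanSpace ℂ (Fin n)) :
    ((inner ℂ (mact M v) v).re : ℂ) = inner ℂ (mact M v) v :=
  (isSymmetric_toEuclideanLin_iff.mpr hM).coe_re_inner_apply_self v

lemma Matrix.PosSemidef.re_inner_mact_self_nonneg (hM : M.PosSemidef)
    (v : EuclideanSpace ℂ (Fin n)) : 0 ≤ (inner ℂ (mact M v) v).re :=
  (isPositive_toEuclideanLin_iff.mpr hM).re_inner_nonneg_left v

lemma Matrix.PosDef.re_inner_mact_self_pos (hM : M.PosDef)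
    {v : EuclideanSpace ℂ (Fin n)} (hv : v ≠ 0) : 0 < (inner ℂ (mact M v) v).re := by
  rw [← inner_conj_symm, Complex.conj_re, EuclideanSpace.inner_eq_star_dotProduct, dotProduct_comm]
  exact hM.re_dotProduct_pos (by simpa using hv)

end QuadraticForm

lemma im_inner_eq_of_add_mact_eq {n : ℕ} {V f₁ f₂ : Matrix (Fin n) (Fin n) ℂ}
    (hV : V.IsHermitian) (hf₁ : f₁.IsHermitian) (hf₂ : f₂.IsHermitian) {lam : ℂ}
    {a v : EuclideanSpace ℂ (Fin n)}
    (h : a + mact V v = lam • mact f₁ v + lam ^ 2 • mact f₂ v) :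
    (inner ℂ a v).im =
      -lam.im * ((inner ℂ (mact f₁ v) v).re + 2 * lam.re * (inner ℂ (mact f₂ v) v).re) := by
  rw [eq_sub_of_add_eq h, inner_sub_left, inner_add_left, inner_smul_left, inner_smul_left,
    ← hf₁.ofReal_re_inner_mact_self, ← hf₂.ofReal_re_inner_mact_self,
    ← hV.ofReal_re_inner_mact_self]
  simp only [Complex.sub_im, Complex.add_im, Complex.mul_im, Complex.conj_re, Complex.conj_im,
    Complex.ofReal_re, Complex.ofReal_im, sq, Complex.mul_re]
  ring

lemma MeasureTheory.MemLp.integrable_inner {α 𝕜 E : Type*} [MeasurableSpace α] {μ : Measure α}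
    [RCLike 𝕜] [NormedAddCommGroup E] [InnerProductSpace 𝕜 E] {f g : α → E}
    (hf : MemLp f 2 μ) (hg : MemLp g 2 μ) :
    Integrable (fun x => inner 𝕜 (f x) (g x)) μ :=
  (L2.integrable_inner (hf.toLp f) (hg.toLp g)).congr <| by
    filter_upwards [hf.coeFn_toLp, hg.coeFn_toLp] with x hfx hgx
    rw [hfx, hgx]

lemma hasDerivAt_im_inner_deriv_self {E : Type*} [NormedAddCommGroup E] [InnerProductSpace ℂ E]
    [NormedSpace ℝ E] {y y' : ℝ → E} {y'' : E} {x : ℝ}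
    (hy : HasDerivAt y (y' x) x) (hy' : HasDerivAt y' y'' x) :
    HasDerivAt (fun t => (inner ℂ (y' t) (y t)).im) (inner ℂ y'' (y x)).im x :=
  (Complex.imCLM.hasFDerivAt.comp_hasDerivAt x (hy'.inner ℂ hy)).congr_deriv <| by
    rw [Complex.imCLM_apply, Complex.add_im,
      Complex.conj_eq_iff_im.mp (inner_conj_symm (y' x) (y' x)), zero_add]

lemma Antitone.eq_zero_of_integrable {u : ℝ → ℝ} (hu : Antitone u) (hi : Integrable u) :
    u = 0 := by
  have not_bounded_away : ∀ (s : Set ℝ), volume s = ⊤ → ∀ ε > 0, ¬ ∀ x ∈ s, ε ≤ |u x| :=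
    fun s hs ε hε hsε => (hi.measure_norm_ge_lt_top hε).ne <| top_le_iff.mp <|
      hs ▸ measure_mono hsε
  funext x
  rcases lt_trichotomy (u x) 0 with hneg | hzero | hpos
  · refine absurd (fun t ht => ?_) (not_bounded_away (Ici x) (by simp) _ (neg_pos.mpr hneg))
    rw [abs_of_neg ((hu ht).trans_lt hneg)]
    exact neg_le_neg (hu ht)
  · exact hzero
  · exact absurd (fun t ht => (hu ht).trans (le_abs_self _))
      (not_bounded_away (Iic x) (by simp) _ hpos)

theorem wholeline_unstable_eigenvalues_real_general {n : ℕ}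
    (V f₁ f₂ : ℝ → Matrix (Fin n) (Fin n) ℂ)
    (hVherm : ∀ x : ℝ, (V x).IsHermitian)
    (hf₁pos : ∀ x : ℝ, (f₁ x).PosDef)
    (hf₂pos : ∀ x : ℝ, (f₂ x).PosSemidef)
    (lam : ℂ) (hlam : 0 ≤ lam.re)
    (y y' y'' : ℝ → EuclideanSpace ℂ (Fin n))
    (hyne : ∃ x : ℝ, y x ≠ 0)
    (hy1 : ∀ x : ℝ, HasDerivAt y (y' x) x)
    (hy2 : ∀ x : ℝ, HasDerivAt y' (y'' x) x)
    (hyL2 : Integrable (fun x => ‖y x‖ ^ 2))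
    (hy'L2 : Integrable (fun x => ‖y' x‖ ^ 2))
    (heqn : ∀ x : ℝ, y'' x + mact (V x) (y x)
        = lam • mact (f₁ x) (y x) + lam ^ 2 • mact (f₂ x) (y x)) :
    lam.im = 0 := by
  obtain ⟨x₀, hx₀⟩ := hyne
  set w : ℝ → ℝ := fun x => (inner ℂ (mact (f₁ x) (y x)) (y x)).re +
    2 * lam.re * (inner ℂ (mact (f₂ x) (y x)) (y x)).re
  have hw_nonneg (x : ℝ) : 0 ≤ w x :=
    add_nonneg ((hf₁pos x).posSemidef.re_inner_mact_self_nonneg _)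
      (mul_nonneg (by positivity) ((hf₂pos x).re_inner_mact_self_nonneg _))
  have hw_pos : 0 < w x₀ :=
    add_pos_of_pos_of_nonneg ((hf₁pos x₀).re_inner_mact_self_pos hx₀)
      (mul_nonneg (by positivity) ((hf₂pos x₀).re_inner_mact_self_nonneg _))
  set v : ℝ → ℝ := fun t => lam.im * (inner ℂ (y' t) (y t)).im
  have hv (x : ℝ) : HasDerivAt v (-(lam.im ^ 2 * w x)) x := by
    refine ((hasDerivAt_im_inner_deriv_self (hy1 x) (hy2 x)).const_mul lam.im).congr_deriv ?_
    rw [im_inner_eq_of_add_mact_eq (hVherm x) (hf₁pos x).isHermitian (hf₂pos x).isHermitian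
      (heqn x)]
    ring
  have memLp_two {z : ℝ → EuclideanSpace ℂ (Fin n)} (hz : Continuous z)
      (hz2 : Integrable (fun x => ‖z x‖ ^ 2)) : MemLp z 2 :=
    (memLp_two_iff_integrable_sq_norm hz.aestronglyMeasurable).mpr hz2
  have hy_cont : Continuous y := continuous_iff_continuousAt.2 fun x => (hy1 x).continuousAt
  have hy'_cont : Continuous y' := continuous_iff_continuousAt.2 fun x => (hy2 x).continuousAt
  have hv_int : Integrable v :=
    ((memLp_two hy'_cont hy'L2).integrable_inner (𝕜 := ℂ) (memLp_two hy_cont hyL2)).im.const_mul _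
  have hv_zero : v = 0 := (antitone_of_hasDerivAt_nonpos hv fun x =>
    neg_nonpos.mpr (mul_nonneg (sq_nonneg _) (hw_nonneg x))).eq_zero_of_integrable hv_int
  have hderiv_zero : lam.im ^ 2 * w x₀ = 0 :=
    neg_eq_zero.mp ((hv x₀).unique (hv_zero ▸ hasDerivAt_const x₀ 0))
  simpa [hw_pos.ne'] using hderiv_zero

/-- every eigenvalue of the whole-line quadratic pencil with nonnegative
real part is real. -/
theorem wholeline_unstable_eigenvalues_real {n : ℕ} (hn : 1 ≤ n)
    (V f₁ f₂ : ℝ → Matrix (Fin n) (Fin n) ℂ)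
    (hVcont : Continuous V)
    (hf₁cont : Continuous f₁)
    (hf₂cont : Continuous f₂)
    (hbdd : ∃ C : ℝ, ∀ x : ℝ,
      ‖Matrix.toEuclideanCLM (𝕜 := ℂ) (V x)‖ ≤ C ∧
      ‖Matrix.toEuclideanCLM (𝕜 := ℂ) (f₁ x)‖ ≤ C ∧
      ‖Matrix.toEuclideanCLM (𝕜 := ℂ) (f₂ x)‖ ≤ C)
    (hVherm : ∀ x : ℝ, (V x).IsHermitian)
    (hf₁herm : ∀ x : ℝ, (f₁ x).IsHermitian)
    (hf₂herm : ∀ x : ℝ, (f₂ x).IsHermitian)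
    (hf₁pos : ∀ x : ℝ, (f₁ x).PosDef)
    (hf₂pos : ∀ x : ℝ, (f₂ x).PosSemidef)
    (lam : ℂ) (hlam : 0 ≤ lam.re)
    (y y' y'' : ℝ → EuclideanSpace ℂ (Fin n))
    (hyne : ∃ x : ℝ, y x ≠ 0)
    (hy1 : ∀ x : ℝ, HasDerivAt y (y' x) x)
    (hy2 : ∀ x : ℝ, HasDerivAt y' (y'' x) x)
    (hycont : Continuous y'')
    (hyL2 : Integrable (fun x => ‖y x‖ ^ 2))
    (hy'L2 : Integrable (fun x => ‖y' x‖ ^ 2))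
    (hy''L2 : Integrable (fun x => ‖y'' x‖ ^ 2))
    (heqn : ∀ x : ℝ, y'' x + mact (V x) (y x)
        = lam • mact (f₁ x) (y x) + lam ^ 2 • mact (f₂ x) (y x)) :
    lam.im = 0 :=
  wholeline_unstable_eigenvalues_real_general V f₁ f₂ hVherm hf₁pos hf₂pos lam hlam y y' y'' hyne
    hy1 hy2 hyL2 hy'L2 heqn
end
end
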